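/- In the free group F on generators x_s, the map â₁⁻¹ defined by x_{j+1,s} ↦ x_{j,s} for j ≥ 2, x_{1,s} ↦ x_{1,1,s}, x_2 ↦ x_{1,1}⁻¹·x_1, and x_{2,j,s} ↦ x_{1,j+1,s} for j ≥ 1 (on remaining generators suitably), extends to an injective endomorphism of F, and it maps every special word to a special word, where a reduced word is special if it has a suffix of the form x_s⁻¹·x_{s,j₁,s₁}·…·x_{s,j_r,s_r} with r ≥ 0. -/

import Mathlib

/-- The free group `F_•` on generators `x_s` indexed by nonempty finite sequences
of positive integers; a nonempty sequence is encoded as a (head, tail) pair. -/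
abbrev FG := FreeGroup (ℕ+ × List ℕ+)

/-- The endomorphism `â₁⁻¹` of `F_•`:
`x_{1,s} ↦ x_{1,1,s}`, `x₂ ↦ x_{1,1}⁻¹·x₁`, `x_{2,j,s} ↦ x_{1,j+1,s}`, and
`x_{j+1,s} ↦ x_{j,s}` for `j ≥ 2`. -/
def aHatInv : FG →* FG :=
  FreeGroup.lift fun p =>
    if p.1 = 1 then FreeGroup.of ((1 : ℕ+), (1 : ℕ+) :: p.2)
    else if p.1 = 2 then
      match p.2 with
      | [] => (FreeGroup.of ((1 : ℕ+), ([1] : List ℕ+)))⁻¹ *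
          FreeGroup.of ((1 : ℕ+), ([] : List ℕ+))
      | j :: s => FreeGroup.of ((1 : ℕ+), (j + 1) :: s)
    else FreeGroup.of (p.1 - 1, p.2)

/-- A reduced word is special if it admits a suffix of the form
`x_s⁻¹ · x_{s,j₁,s₁} · … · x_{s,j_r,s_r}` with `r ≥ 0`. -/
def specialWord (u : FG) : Prop :=
  ∃ (h : ℕ+) (t : List ℕ+) (L : List (ℕ+ × List ℕ+)),
    (∀ q ∈ L, ∃ (j : ℕ+) (s' : List ℕ+), q = (h, t ++ j :: s')) ∧
    List.IsSuffix (((h, t), false) :: L.map (fun q => (q, true))) u.toWord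


namespace AH

abbrev G : Type := ℕ+ × List ℕ+
abbrev Lam : Type := G × Bool

def A : G := ((1 : ℕ+), [(1 : ℕ+)])
def B : G := ((1 : ℕ+), ([] : List ℕ+))
def X2 : G := ((2 : ℕ+), ([] : List ℕ+))

/-! ### PNat arithmetic helpers -/

lemma pnat_three {h : ℕ+} (h1 : h ≠ 1) (h2 : h ≠ 2) : 2 < (h : ℕ) := by
  obtain ⟨n, hn⟩ := h
  have e1 : n ≠ 1 := by rintro rfl; exact h1 rfl
  have e2 : n ≠ 2 := by rintro rfl; exact h2 rfl
  show 2 < n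
  omega

lemma pnat_pos (j : ℕ+) : 0 < (j : ℕ) := j.2

lemma succ_coe (j : ℕ+) : ((j + 1 : ℕ+) : ℕ) = (j : ℕ) + 1 := by
  rw [PNat.add_coe, PNat.one_coe]

lemma succ_ne_one (j : ℕ+) : j + 1 ≠ 1 := by
  intro e
  have h : ((j + 1 : ℕ+) : ℕ) = 1 := by rw [e, PNat.one_coe]
  rw [succ_coe] at h
  have := pnat_pos j
  omega

lemma succ_inj {j k : ℕ+} (e : j + 1 = k + 1) : j = k := by
  apply PNat.coe_injective
  have h : ((j + 1 : ℕ+) : ℕ) = ((k + 1 : ℕ+) : ℕ) := by rw [e]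
  rw [succ_coe, succ_coe] at h
  omega

lemma succ_sub_one (j : ℕ+) : j + 1 - 1 = j := by
  apply PNat.coe_injective
  rw [PNat.sub_coe, if_pos]
  · rw [succ_coe, PNat.one_coe]; omega
  · exact_mod_cast (by have := pnat_pos j; rw [succ_coe, PNat.one_coe]; omega :
      ((1:ℕ+):ℕ) < ((j + 1 : ℕ+) : ℕ))

lemma sub_one_coe {h : ℕ+} (h3 : 2 < (h : ℕ)) : ((h - 1 : ℕ+) : ℕ) = (h : ℕ) - 1 := by
  rw [PNat.sub_coe, if_pos]
  · rw [PNat.one_coe]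
  · exact_mod_cast (by rw [PNat.one_coe]; omega : ((1:ℕ+):ℕ) < (h : ℕ))

lemma sub_one_ne_one {h : ℕ+} (h1 : h ≠ 1) (h2 : h ≠ 2) : h - 1 ≠ 1 := by
  have h3 := pnat_three h1 h2
  intro e
  have h' : ((h - 1 : ℕ+) : ℕ) = 1 := by rw [e, PNat.one_coe]
  rw [sub_one_coe h3] at h'
  omega

lemma sub_one_add_one {h : ℕ+} (h1 : h ≠ 1) (h2 : h ≠ 2) : h - 1 + 1 = h := by
  have h3 := pnat_three h1 h2
  apply PNat.coe_injective
  rw [PNat.add_coe, sub_one_coe h3, PNat.one_coe]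
  omega

/-! ### The retraction `gi`, proving injectivity -/

def gi : FG →* FG :=
  FreeGroup.lift fun p =>
    if p.1 = 1 then
      match p.2 with
      | [] => FreeGroup.of ((1 : ℕ+), ([] : List ℕ+)) * FreeGroup.of ((2 : ℕ+), ([] : List ℕ+))
      | j :: s =>
        if j = 1 then FreeGroup.of ((1 : ℕ+), s) else FreeGroup.of ((2 : ℕ+), (j - 1) :: s)
    else FreeGroup.of (p.1 + 1, p.2)

lemma gi_of_one (t : List ℕ+) :
    gi (FreeGroup.of ((1 : ℕ+), (1:ℕ+) :: t)) = FreeGroup.of ((1:ℕ+), t) := by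
  rw [gi, FreeGroup.lift_apply_of]
  simp

lemma gi_aHat (p : G) : gi (aHatInv (FreeGroup.of p)) = FreeGroup.of p := by
  obtain ⟨h, t⟩ := p
  rw [aHatInv, FreeGroup.lift_apply_of]
  by_cases h1 : h = 1
  · subst h1
    rw [if_pos rfl]
    exact gi_of_one t
  by_cases h2 : h = 2
  · subst h2
    rw [if_neg h1, if_pos rfl]
    cases t with
    | nil =>
      rw [map_mul, map_inv, gi, FreeGroup.lift_apply_of, FreeGroup.lift_apply_of]
      simp
    | cons j s =>
      rw [gi, FreeGroup.lift_apply_of]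
      simp [succ_ne_one j, succ_sub_one j]
  · rw [if_neg h1, if_neg h2, gi, FreeGroup.lift_apply_of]
    simp [sub_one_ne_one h1 h2, sub_one_add_one h1 h2]

lemma gi_aHat' (x : FG) : gi (aHatInv x) = x := by
  have e : gi.comp aHatInv = MonoidHom.id FG :=
    FreeGroup.ext_hom _ _ fun a => by simpa using gi_aHat a
  calc gi (aHatInv x) = (gi.comp aHatInv) x := rfl
    _ = x := by rw [e]; rfl

/-! ### Letterwise image maps -/

def iota (p : G) : G :=
  if p.1 = 1 then ((1 : ℕ+), (1 : ℕ+) :: p.2)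
  else if p.1 = 2 then
    match p.2 with
    | [] => B
    | j :: s => ((1 : ℕ+), (j + 1) :: s)
  else (p.1 - 1, p.2)

lemma iota_ne_B {p : G} (hp : p ≠ X2) : iota p ≠ B := by
  obtain ⟨h, t⟩ := p
  by_cases h1 : h = 1
  · subst h1; simp [iota, B]
  by_cases h2 : h = 2
  · subst h2
    cases t with
    | nil => exact absurd rfl hp
    | cons j s => simp [iota, h1, B]
  · simp only [iota, if_neg h1, if_neg h2]
    intro e
    exact sub_one_ne_one h1 h2 (congrArg Prod.fst e)

lemma iota_eq_A {p : G} (hp : p ≠ X2) : iota p = A ↔ p = B := by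
  obtain ⟨h, t⟩ := p
  by_cases h1 : h = 1
  · subst h1
    simp only [iota, if_pos rfl]
    constructor
    · intro e
      have : (1 : ℕ+) :: t = [(1:ℕ+)] := congrArg Prod.snd e
      have ht : t = [] := by simpa using this
      rw [ht]; rfl
    · intro e
      have ht : t = [] := congrArg Prod.snd e
      rw [ht]; rfl
  by_cases h2 : h = 2
  · subst h2
    cases t with
    | nil => exact absurd rfl hp
    | cons j s =>
      simp only [iota, if_neg h1, if_pos rfl]
      constructor
      · intro e
        have : (j + 1) :: s = [(1:ℕ+)] := congrArg Prod.snd e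
        exact absurd (by simpa using this : j + 1 = 1 ∧ s = []).1 (succ_ne_one j)
      · intro e
        have e2 : (2 : ℕ+) = (1 : ℕ+) := congrArg Prod.fst e
        exact absurd e2 (by decide)
  · simp only [iota, if_neg h1, if_neg h2]
    constructor
    · intro e
      exact absurd (congrArg Prod.fst e) (sub_one_ne_one h1 h2)
    · intro e
      exact absurd (congrArg Prod.fst e) h1

def rho (p : G) : G :=
  if p.1 = 1 then
    match p.2 with
    | [] => p
    | j :: s => if j = 1 then ((1 : ℕ+), s) else ((2 : ℕ+), (j - 1) :: s)
  else (p.1 + 1, p.2)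

lemma rho_iota {p : G} (hp : p ≠ X2) : rho (iota p) = p := by
  obtain ⟨h, t⟩ := p
  by_cases h1 : h = 1
  · subst h1
    simp only [iota, if_pos rfl]
    simp [rho]
  by_cases h2 : h = 2
  · subst h2
    cases t with
    | nil => exact absurd rfl hp
    | cons j s =>
      simp only [iota, if_neg h1, if_pos rfl]
      simp [rho, succ_ne_one j, succ_sub_one j]
  · simp only [iota, if_neg h1, if_neg h2]
    simp [rho, sub_one_ne_one h1 h2, sub_one_add_one h1 h2]

lemma iota_inj {p q : G} (hp : p ≠ X2) (hq : q ≠ X2) (h : iota p = iota q) : p = q := by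
  rw [← rho_iota hp, ← rho_iota hq, h]

lemma iota_special {h : ℕ+} {t : List ℕ+} (hx : ((h, t) : G) ≠ X2) (j : ℕ+) (s' : List ℕ+) :
    ∃ (k : ℕ+) (s'' : List ℕ+),
      iota (h, t ++ j :: s') = ((iota (h, t)).1, (iota (h, t)).2 ++ k :: s'') := by
  by_cases h1 : h = 1
  · subst h1
    exact ⟨j, s', by simp [iota]⟩
  by_cases h2 : h = 2
  · subst h2
    cases t with
    | nil => exact absurd rfl hx
    | cons j0 s0 => exact ⟨j, s', by simp [iota, h1]⟩
  · exact ⟨j, s', by simp [iota, h1, h2]⟩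

/-! ### phi and psi -/

def phi (l : Lam) : List Lam :=
  if l.1 = X2 then
    if l.2 then [(A, false), (B, true)] else [(B, false), (A, true)]
  else [(iota l.1, l.2)]

def psi : List Lam → List Lam
  | [] => []
  | [l] => phi l
  | a :: b :: rest =>
    if a = (B, true) ∧ b = (X2, true) then (B, true) :: psi rest
    else if a = (X2, false) ∧ b = (B, false) then (B, false) :: psi rest
    else phi a ++ psi (b :: rest)

lemma psi_nil : psi [] = [] := rfl
lemma psi_single (l : Lam) : psi [l] = phi l := rfl
lemma psi_cons2 (a b : Lam) (rest : List Lam) :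
    psi (a :: b :: rest) =
      if a = (B, true) ∧ b = (X2, true) then (B, true) :: psi rest
      else if a = (X2, false) ∧ b = (B, false) then (B, false) :: psi rest
      else phi a ++ psi (b :: rest) := rfl

lemma phi_of_ne {p : G} (hp : p ≠ X2) (b : Bool) : phi (p, b) = [(iota p, b)] := by
  simp [phi, hp]

lemma phi_B_true : phi (B, true) = [(A, true)] := by
  rw [phi_of_ne (by decide)]
  simp [iota, B, A]

lemma phi_B_false : phi (B, false) = [(A, false)] := by
  rw [phi_of_ne (by decide)]
  simp [iota, B, A]

lemma phi_X2_true : phi (X2, true) = [(A, false), (B, true)] := by simp [phi]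
lemma phi_X2_false : phi (X2, false) = [(B, false), (A, true)] := by simp [phi]

/-! ### Group-level identities -/

lemma mk_cons (l : Lam) (w : List Lam) :
    FreeGroup.mk (l :: w) = FreeGroup.mk [l] * FreeGroup.mk w := by
  rw [FreeGroup.mul_mk]; rfl

lemma mk_single_true (p : G) : FreeGroup.mk [(p, true)] = FreeGroup.of p := rfl

lemma mk_pair (x y : Lam) : FreeGroup.mk [x, y] = FreeGroup.mk [x] * FreeGroup.mk [y] := by
  rw [FreeGroup.mul_mk]; rfl

lemma mk_single_false (p : G) : FreeGroup.mk [(p, false)] = (FreeGroup.of p)⁻¹ := by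
  rw [FreeGroup.of, FreeGroup.inv_mk]
  simp [FreeGroup.invRev]

lemma aHat_of (p : G) (hp : p ≠ X2) : aHatInv (FreeGroup.of p) = FreeGroup.of (iota p) := by
  obtain ⟨h, t⟩ := p
  rw [aHatInv, FreeGroup.lift_apply_of]
  by_cases h1 : h = 1
  · subst h1; rw [if_pos rfl]; simp [iota]
  by_cases h2 : h = 2
  · subst h2
    rw [if_neg h1, if_pos rfl]
    cases t with
    | nil => exact absurd rfl hp
    | cons j s => simp [iota, h1]
  · rw [if_neg h1, if_neg h2]
    simp [iota, h1, h2]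

lemma aHat_X2 : aHatInv (FreeGroup.of X2) = (FreeGroup.of A)⁻¹ * FreeGroup.of B := by
  rw [aHatInv, FreeGroup.lift_apply_of]
  norm_num [X2, A, B]

lemma aHat_single (l : Lam) : aHatInv (FreeGroup.mk [l]) = FreeGroup.mk (phi l) := by
  obtain ⟨p, b⟩ := l
  by_cases hp : p = X2
  · subst hp
    cases b
    · rw [mk_single_false, map_inv, aHat_X2, phi_X2_false]
      rw [mk_cons, mk_single_false, mk_single_true]
      group
    · rw [mk_single_true, aHat_X2, phi_X2_true]
      rw [mk_cons, mk_single_false, mk_single_true]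
  · rw [phi_of_ne hp]
    cases b
    · rw [mk_single_false, map_inv, aHat_of p hp, mk_single_false]
    · rw [mk_single_true, aHat_of p hp, mk_single_true]

lemma aHat_mk (w : List Lam) : aHatInv (FreeGroup.mk w) = FreeGroup.mk (w.flatMap phi) := by
  induction w with
  | nil => rw [← FreeGroup.one_eq_mk, map_one, List.flatMap_nil, FreeGroup.one_eq_mk]
  | cons l w ih =>
    rw [mk_cons, map_mul, aHat_single, ih, FreeGroup.mul_mk, List.flatMap_cons]

lemma psi_spec : ∀ w : List Lam, FreeGroup.mk (psi w) = FreeGroup.mk (w.flatMap phi)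
  | [] => rfl
  | [l] => by simp [psi_single]
  | a :: b :: rest => by
    rw [psi_cons2]
    by_cases e1 : a = (B, true) ∧ b = (X2, true)
    · obtain ⟨rfl, rfl⟩ := e1
      rw [if_pos ⟨rfl, rfl⟩]
      rw [List.flatMap_cons, List.flatMap_cons, phi_B_true, phi_X2_true]
      rw [mk_cons, psi_spec rest]
      show _ = FreeGroup.mk (([(A, true)] ++ [(A, false), (B, true)]) ++ rest.flatMap phi)
      rw [← FreeGroup.mul_mk, ← FreeGroup.mul_mk, mk_pair]
      rw [mk_single_true, mk_single_false, mk_single_true]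
      group
    · rw [if_neg e1]
      by_cases e2 : a = (X2, false) ∧ b = (B, false)
      · obtain ⟨rfl, rfl⟩ := e2
        rw [if_pos ⟨rfl, rfl⟩]
        rw [List.flatMap_cons, List.flatMap_cons, phi_X2_false, phi_B_false]
        rw [mk_cons, psi_spec rest]
        show _ = FreeGroup.mk (([(B, false), (A, true)] ++ [(A, false)]) ++ rest.flatMap phi)
        rw [← FreeGroup.mul_mk, ← FreeGroup.mul_mk, mk_pair]
        rw [mk_single_false, mk_single_true, mk_single_false]
        group
      · rw [if_neg e2, List.flatMap_cons, ← FreeGroup.mul_mk, ← FreeGroup.mul_mk,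
          psi_spec (b :: rest)]

/-! ### Reduced words -/

def NR (a b : Lam) : Prop := ¬(a.1 = b.1 ∧ a.2 = !b.2)

lemma NR_iff' (x y : Lam) : NR x y ↔ y ≠ (x.1, !x.2) := by
  unfold NR
  obtain ⟨p, b⟩ := x
  obtain ⟨q, c⟩ := y
  constructor
  · intro h e
    rw [Prod.mk.injEq] at e
    exact h ⟨e.1.symm, by rw [e.2]; simp⟩
  · intro h hc
    apply h
    rw [Prod.mk.injEq]
    exact ⟨hc.1.symm, by rw [hc.2]; simp⟩

lemma reduce_eq_self {w : List Lam} (h : List.Chain' NR w) : FreeGroup.reduce w = w := by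
  induction w with
  | nil => rfl
  | cons x w ih =>
    rw [FreeGroup.reduce.cons, ih h.tail]
    cases w with
    | nil => rfl
    | cons y t =>
      have hxy : NR x y := (List.isChain_cons_cons.mp h).1
      simp only []
      rw [if_neg hxy]

lemma chain'_reduce (w : List Lam) : List.Chain' NR (FreeGroup.reduce w) := by
  induction w with
  | nil => exact List.isChain_nil
  | cons x w ih =>
    rw [FreeGroup.reduce.cons]
    cases r : FreeGroup.reduce w with
    | nil => simp [List.Chain']
    | cons y t =>
      rw [r] at ih
      simp only []
      split_ifs with hc
      · exact ih.tail
      · exact List.isChain_cons_cons.mpr ⟨hc, ih⟩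

lemma toWord_chain (u : FG) : List.Chain' NR u.toWord := by
  rw [← FreeGroup.reduce_toWord]
  exact chain'_reduce _

lemma toWord_mk_of_chain {w : List Lam} (h : List.Chain' NR w) :
    (FreeGroup.mk w).toWord = w := by
  rw [FreeGroup.toWord_mk, reduce_eq_self h]

/-! ### Heads and last letters of phi -/

def hd (l : Lam) : Lam :=
  if l.1 = X2 then (if l.2 then (A, false) else (B, false)) else (iota l.1, l.2)

def lst (l : Lam) : Lam :=
  if l.1 = X2 then (if l.2 then (B, true) else (A, true)) else (iota l.1, l.2)

lemma phi_head (l : Lam) : ∃ t, phi l = hd l :: t := by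
  by_cases hx : l.1 = X2
  · cases hb : l.2
    · exact ⟨[(A, true)], by simp [phi, hd, hx, hb]⟩
    · exact ⟨[(B, true)], by simp [phi, hd, hx, hb]⟩
  · exact ⟨[], by simp [phi, hd, hx]⟩

lemma phi_last (l : Lam) : ∃ t, phi l = t ++ [lst l] := by
  by_cases hx : l.1 = X2
  · cases hb : l.2
    · exact ⟨[(B, false)], by simp [phi, lst, hx, hb]⟩
    · exact ⟨[(A, false)], by simp [phi, lst, hx, hb]⟩
  · exact ⟨[], by simp [phi, lst, hx]⟩

lemma phi_chain (l : Lam) : List.Chain' NR (phi l) := by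
  by_cases hx : l.1 = X2
  · cases hb : l.2 <;>
      simp [phi, hx, hb, List.Chain', List.isChain_cons_cons, NR, A, B]
  · simp [phi, hx, List.Chain']

lemma hd_ne_Btrue (c : Lam) : hd c ≠ ((B : G), true) := by
  by_cases hx : c.1 = X2
  · cases hb : c.2 <;> simp [hd, hx, hb]
  · simp only [hd, if_neg hx]
    intro e
    exact iota_ne_B hx (congrArg Prod.fst e)

lemma hd_eq_Bfalse {c : Lam} : hd c = ((B : G), false) ↔ c = ((X2 : G), false) := by
  by_cases hx : c.1 = X2
  · cases hb : c.2
    · simp only [hd, if_pos hx, hb, if_false]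
      constructor
      · intro _; exact Prod.ext hx hb
      · intro _; rfl
    · simp only [hd, if_pos hx, hb, if_true]
      constructor
      · intro e
        exact absurd (congrArg Prod.fst e) (by decide)
      · intro e
        have : c.2 = false := congrArg Prod.snd e
        rw [hb] at this
        exact absurd this (by decide)
  · simp only [hd, if_neg hx]
    constructor
    · intro e
      exact absurd (congrArg Prod.fst e) (iota_ne_B hx)
    · intro e
      exact absurd (congrArg Prod.fst e) hx

lemma hd_eq_Afalse {c : Lam} :
    hd c = ((A : G), false) → c = ((X2 : G), true) ∨ c = ((B : G), false) := by
  by_cases hx : c.1 = X2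
  · cases hb : c.2
    · intro e
      exact absurd (congrArg Prod.fst e) (by simp [hd, hx, hb]; decide)
    · intro _
      exact Or.inl (Prod.ext hx hb)
  · simp only [hd, if_neg hx]
    intro e
    have e1 : iota c.1 = A := congrArg Prod.fst e
    have e2 : c.2 = false := congrArg Prod.snd e
    exact Or.inr (Prod.ext ((iota_eq_A hx).mp e1) e2)

lemma lst_ne_Bfalse (c : Lam) : lst c ≠ ((B : G), false) := by
  by_cases hx : c.1 = X2
  · cases hb : c.2 <;> simp [lst, hx, hb, A, B]
  · simp only [lst, if_neg hx]
    intro e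
    exact iota_ne_B hx (congrArg Prod.fst e)

lemma lst_eq_Btrue {c : Lam} : lst c = ((B : G), true) → c = ((X2 : G), true) := by
  by_cases hx : c.1 = X2
  · cases hb : c.2
    · intro e
      exact absurd (congrArg Prod.fst e) (by simp [lst, hx, hb]; decide)
    · intro _
      exact Prod.ext hx hb
  · simp only [lst, if_neg hx]
    intro e
    exact absurd (congrArg Prod.fst e) (iota_ne_B hx)

lemma lst_eq_Atrue {c : Lam} :
    lst c = ((A : G), true) → c = ((X2 : G), false) ∨ c = ((B : G), true) := by
  by_cases hx : c.1 = X2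
  · cases hb : c.2
    · intro _
      exact Or.inl (Prod.ext hx hb)
    · intro e
      exact absurd (congrArg Prod.fst e) (by simp [lst, hx, hb]; decide)
  · simp only [lst, if_neg hx]
    intro e
    have e1 : iota c.1 = A := congrArg Prod.fst e
    have e2 : c.2 = true := congrArg Prod.snd e
    exact Or.inr (Prod.ext ((iota_eq_A hx).mp e1) e2)

/-! ### Head of psi -/

lemma psi_head (l : Lam) (w : List Lam) :
    (psi (l :: w)).head? = some (hd l) ∨
      (l = (((B : G)), true) ∧ (psi (l :: w)).head? = some (((B : G)), true)) := by
  cases w with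
  | nil =>
    obtain ⟨t, ht⟩ := phi_head l
    left
    rw [psi_single, ht]
    rfl
  | cons b rest =>
    rw [psi_cons2]
    by_cases e1 : l = (B, true) ∧ b = (X2, true)
    · rw [if_pos e1]
      exact Or.inr ⟨e1.1, rfl⟩
    rw [if_neg e1]
    by_cases e2 : l = (X2, false) ∧ b = (B, false)
    · rw [if_pos e2]
      left
      obtain ⟨rfl, -⟩ := e2
      simp [hd, X2]
    · rw [if_neg e2]
      obtain ⟨t, ht⟩ := phi_head l
      rw [ht]
      left
      rfl

/-! ### No cancellation at junctions -/

lemma no_cancel {a b : Lam} (hab : NR a b)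
    (h1 : ¬(a = (((B : G)), true) ∧ b = (((X2 : G)), true)))
    (h2 : ¬(a = (((X2 : G)), false) ∧ b = (((B : G)), false)))
    {d : Lam}
    (hd' : d = hd b ∨ (b = (((B : G)), true) ∧ d = (((B : G)), true))) :
    NR (lst a) d := by
  rw [NR_iff']
  rcases hd' with rfl | ⟨rfl, rfl⟩
  · -- d = hd b
    intro e
    -- e : hd b = ((lst a).1, !(lst a).2)
    by_cases ax : a.1 = X2
    · cases ab : a.2
      · -- lst a = (A, true); hd b = (A, false)
        have hlst : lst a = ((A : G), true) := by simp [lst, ax, ab]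
        rw [hlst] at e
        simp only [Bool.not_true] at e
        rcases hd_eq_Afalse e with hb | hb
        · -- a = (X2, false), b = (X2, true): contradiction with NR a b
          exact hab ⟨ax.trans (congrArg Prod.fst hb).symm, by simp [ab, hb]⟩
        · exact h2 ⟨Prod.ext ax ab, hb⟩
      · -- lst a = (B, true); hd b = (B, false)
        have hlst : lst a = ((B : G), true) := by simp [lst, ax, ab]
        rw [hlst] at e
        simp only [Bool.not_true] at e
        have hb := hd_eq_Bfalse.mp e
        exact hab ⟨ax.trans (congrArg Prod.fst hb).symm, by simp [ab, hb]⟩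
    · -- lst a = (iota a.1, a.2); hd b = (iota a.1, !a.2)
      have hlst : lst a = (iota a.1, a.2) := by simp [lst, ax]
      rw [hlst] at e
      by_cases bx : b.1 = X2
      · cases bb : b.2
        · -- hd b = (B, false): iota a.1 = B impossible
          have hhd : hd b = ((B : G), false) := by simp [hd, bx, bb]
          rw [hhd] at e
          exact iota_ne_B ax (congrArg Prod.fst e).symm
        · -- hd b = (A, false): iota a.1 = A, !a.2 = false so a.2 = true: a = (B,true), b = (X2,true)
          have hhd : hd b = ((A : G), false) := by simp [hd, bx, bb]
          rw [hhd] at e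
          have e1 : (A : G) = iota a.1 := congrArg Prod.fst e
          have e2 : (false : Bool) = !a.2 := congrArg Prod.snd e
          have ha1 : a.1 = B := (iota_eq_A ax).mp e1.symm
          have ha2 : a.2 = true := by
            cases h : a.2
            · rw [h] at e2; exact absurd e2 (by decide)
            · rfl
          exact h1 ⟨Prod.ext ha1 ha2, Prod.ext bx bb⟩
      · -- both via iota
        have hhd : hd b = (iota b.1, b.2) := by simp [hd, bx]
        rw [hhd] at e
        have e1 : iota b.1 = iota a.1 := congrArg Prod.fst e
        have e2 : b.2 = !a.2 := congrArg Prod.snd e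
        have eb : b.1 = a.1 := iota_inj bx ax e1
        refine hab ⟨eb.symm, ?_⟩
        rw [e2]
        simp
  · -- b = (B,true), d = (B,true): need (B,true) ≠ ((lst a).1, !(lst a).2)
    intro e
    -- then lst a = (B, false)
    have e1 : (B : G) = (lst a).1 := congrArg Prod.fst e
    have e2 : (true : Bool) = !(lst a).2 := congrArg Prod.snd e
    have : lst a = ((B : G), false) := by
      apply Prod.ext e1.symm
      cases h : (lst a).2
      · rfl
      · rw [h] at e2; exact absurd e2 (by decide)
    exact lst_ne_Bfalse a this

/-! ### psi preserves reducedness -/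

lemma psi_red : ∀ w : List Lam, List.Chain' NR w → List.Chain' NR (psi w)
  | [], _ => List.isChain_nil
  | [l], _ => phi_chain l
  | a :: b :: rest, h => by
    rw [psi_cons2]
    have hab : NR a b := (List.isChain_cons_cons.mp h).1
    by_cases e1 : a = (B, true) ∧ b = (X2, true)
    · rw [if_pos e1]
      obtain ⟨rfl, rfl⟩ := e1
      refine List.isChain_cons.mpr ⟨?_, psi_red rest h.tail.tail⟩
      intro d hdm
      cases rest with
      | nil => simp [psi_nil] at hdm
      | cons c rest' =>
        have hbc : NR (X2, true) c := (List.isChain_cons_cons.mp h.tail).1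
        rw [NR_iff']
        rcases psi_head c rest' with hh | ⟨hc, hh⟩
        · rw [hh] at hdm
          have hdc : d = hd c := by rw [Option.mem_some_iff] at hdm; exact hdm.symm
          subst hdc
          intro e
          have hcv := hd_eq_Bfalse.mp e
          subst hcv
          exact hbc ⟨rfl, rfl⟩
        · rw [hh] at hdm
          have hdc : d = ((B : G), true) := by rw [Option.mem_some_iff] at hdm; exact hdm.symm
          subst hdc
          intro e
          have : (true : Bool) = false := congrArg Prod.snd e
          exact absurd this (by decide)
    rw [if_neg e1]
    by_cases e2 : a = (X2, false) ∧ b = (B, false)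
    · rw [if_pos e2]
      obtain ⟨rfl, rfl⟩ := e2
      refine List.isChain_cons.mpr ⟨?_, psi_red rest h.tail.tail⟩
      intro d hdm
      cases rest with
      | nil => simp [psi_nil] at hdm
      | cons c rest' =>
        have hbc : NR ((B : G), false) c := (List.isChain_cons_cons.mp h.tail).1
        rw [NR_iff']
        rcases psi_head c rest' with hh | ⟨hc, hh⟩
        · rw [hh] at hdm
          have hdc : d = hd c := by rw [Option.mem_some_iff] at hdm; exact hdm.symm
          subst hdc
          intro e
          exact hd_ne_Btrue c e
        · rw [hh] at hdm
          have hdc : d = ((B : G), true) := by rw [Option.mem_some_iff] at hdm; exact hdm.symm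
          exact (hbc (by rw [hc]; exact ⟨rfl, rfl⟩)).elim
    · rw [if_neg e2]
      rw [List.Chain', List.isChain_append]
      refine ⟨phi_chain a, psi_red (b :: rest) h.tail, ?_⟩
      intro x hx y hy
      obtain ⟨t, ht⟩ := phi_last a
      rw [ht] at hx
      have hxa : x = lst a := by
        rw [List.getLast?_concat] at hx
        rw [Option.mem_some_iff] at hx; exact hx.symm
      subst hxa
      rcases psi_head b rest with hh | ⟨hbB, hh⟩
      · rw [hh] at hy
        have hyd : y = hd b := by rw [Option.mem_some_iff] at hy; exact hy.symm
        exact no_cancel hab e1 e2 (Or.inl hyd)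
      · rw [hh] at hy
        have hyd : y = ((B : G), true) := by rw [Option.mem_some_iff] at hy; exact hy.symm
        exact no_cancel hab e1 e2 (Or.inr ⟨hbB, hyd⟩)

/-! ### psi on concatenations without straddling patterns -/

def pat (a b : Lam) : Prop :=
  (a = (((B : G)), true) ∧ b = (((X2 : G)), true)) ∨
    (a = (((X2 : G)), false) ∧ b = (((B : G)), false))

lemma mem_getLast?_cons {x a : Lam} {l : List Lam} (h : x ∈ l.getLast?) :
    x ∈ (a :: l).getLast? := by
  cases l with
  | nil => simp at h
  | cons c l' => rw [List.getLast?_cons_cons]; exact h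

lemma psi_append : ∀ (P : List Lam) (S : List Lam),
    (∀ a ∈ P.getLast?, ∀ b ∈ S.head?, ¬ pat a b) → psi (P ++ S) = psi P ++ psi S
  | [], S, _ => by simp [psi_nil]
  | [l], S, h => by
    cases S with
    | nil => simp [psi_nil]
    | cons b S' =>
      have hnp : ¬ pat l b := h l (by simp) b (by simp)
      show psi (l :: b :: S') = phi l ++ psi (b :: S')
      rw [psi_cons2, if_neg (fun hc => hnp (Or.inl hc)), if_neg (fun hc => hnp (Or.inr hc))]
  | a :: b :: P', S, h => by
    have h' : ∀ x ∈ P'.getLast?, ∀ y ∈ S.head?, ¬ pat x y := by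
      intro x hx y hy
      exact h x (mem_getLast?_cons (mem_getLast?_cons hx)) y hy
    have h'' : ∀ x ∈ (b :: P').getLast?, ∀ y ∈ S.head?, ¬ pat x y := by
      intro x hx y hy
      exact h x (mem_getLast?_cons hx) y hy
    show psi (a :: b :: (P' ++ S)) = psi (a :: b :: P') ++ psi S
    rw [psi_cons2, psi_cons2]
    by_cases e1 : a = (B, true) ∧ b = (X2, true)
    · rw [if_pos e1, if_pos e1, psi_append P' S h']
      rfl
    rw [if_neg e1, if_neg e1]
    by_cases e2 : a = (X2, false) ∧ b = (B, false)
    · rw [if_pos e2, if_pos e2, psi_append P' S h']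
      rfl
    · rw [if_neg e2, if_neg e2]
      have := psi_append (b :: P') S h''
      rw [show (b :: P') ++ S = b :: (P' ++ S) from rfl] at this
      rw [this, List.append_assoc]

lemma psi_flat : ∀ w : List Lam, List.Chain' (fun a b => ¬ pat a b) w → psi w = w.flatMap phi
  | [], _ => by simp [psi_nil]
  | [l], _ => by simp [psi_single]
  | a :: b :: rest, h => by
    have hnp : ¬ pat a b := (List.isChain_cons_cons.mp h).1
    rw [psi_cons2, if_neg (fun hc => hnp (Or.inl hc)), if_neg (fun hc => hnp (Or.inr hc)),
      psi_flat (b :: rest) h.tail]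
    simp

lemma pat_snd {a b : Lam} (h : pat a b) :
    b = (((X2 : G)), true) ∨ b = (((B : G)), false) := by
  rcases h with ⟨-, hb⟩ | ⟨-, hb⟩
  · exact Or.inl hb
  · exact Or.inr hb

lemma chain'_no_pat_of_forall : ∀ (l : List Lam),
    (∀ b ∈ l, ∀ a : Lam, ¬ pat a b) →
    ∀ x : Lam, List.Chain' (fun a b => ¬ pat a b) (x :: l)
  | [], _, x => by simp [List.Chain']
  | c :: l', hl, x => by
    rw [List.Chain', List.isChain_cons_cons]
    exact ⟨hl c (by simp) x,
      chain'_no_pat_of_forall l' (fun b hb a => hl b (by simp [hb]) a) c⟩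

lemma flat_trues (L : List G) (h : ∀ q ∈ L, q ≠ X2) :
    (L.map (fun q => ((q, true) : Lam))).flatMap phi
      = L.map (fun q => ((iota q, true) : Lam)) := by
  induction L with
  | nil => simp
  | cons q L' ih =>
    rw [List.map_cons, List.flatMap_cons, phi_of_ne (h q (by simp)), List.map_cons,
      ih (fun r hr => h r (by simp [hr]))]
    rfl

/-! ### Main preservation theorem -/

lemma preserves (u : FG) (hu : specialWord u) : specialWord (aHatInv u) := by
  obtain ⟨h, t, L, hL, P, hPS⟩ := hu
  set S : List Lam := ((h, t), false) :: L.map (fun q => (q, true)) with hSdef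
  have hwchain : List.Chain' NR u.toWord := toWord_chain u
  have himg : (aHatInv u).toWord = psi u.toWord := by
    have h1 : aHatInv u = FreeGroup.mk (psi u.toWord) := by
      conv_lhs => rw [← FreeGroup.mk_toWord (x := u)]
      rw [aHat_mk, ← psi_spec]
    rw [h1, toWord_mk_of_chain (psi_red _ hwchain)]
  -- elements of L have nonempty second component
  have hq2 : ∀ q ∈ L, q.2 ≠ [] := by
    intro q hq
    obtain ⟨j, s', rfl⟩ := hL q hq
    simp
  have hqX2 : ∀ q ∈ L, q ≠ X2 := by
    intro q hq e
    exact hq2 q hq (by rw [e]; rfl)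
  have hnotpat : ∀ b ∈ L.map (fun q => ((q, true) : Lam)), ∀ a : Lam, ¬ pat a b := by
    intro b hb a hp
    obtain ⟨q, hq, rfl⟩ := List.mem_map.mp hb
    rcases pat_snd hp with e | e
    · exact hqX2 q hq (congrArg Prod.fst e)
    · have : (true : Bool) = false := congrArg Prod.snd e
      exact absurd this (by decide)
  have hTflat : psi (L.map (fun q => ((q, true) : Lam)))
      = L.map (fun q => ((iota q, true) : Lam)) := by
    cases hL' : L.map (fun q => ((q, true) : Lam)) with
    | nil =>
      have : L = [] := by simpa using hL'
      subst this
      simp [psi_nil]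
    | cons x l' =>
      rw [← hL']
      rw [psi_flat _ ?_]
      · exact flat_trues L hqX2
      · rw [hL']
        exact chain'_no_pat_of_forall _ (fun b hb a => hnotpat b (by rw [hL']; simp [hb]) a) x
  by_cases hstr : P.getLast? = some ((X2 : G), false) ∧ h = 1 ∧ t = []
  · -- straddling case
    obtain ⟨hPlast, rfl, rfl⟩ := hstr
    obtain ⟨P₀, rfl⟩ := List.getLast?_eq_some_iff.mp hPlast
    have hw : u.toWord = P₀ ++ (((X2 : G), false) :: S) := by
      rw [← hPS, List.append_assoc]
      rfl
    have e1 : psi u.toWord = psi P₀ ++ psi (((X2 : G), false) :: S) := by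
      rw [hw]
      apply psi_append
      intro a _ b hb
      have hbv : b = ((X2 : G), false) := by
        rw [List.head?_cons, Option.mem_some_iff] at hb
        exact hb.symm
      subst hbv
      intro hp
      rcases pat_snd hp with e | e
      · have : (false : Bool) = true := congrArg Prod.snd e
        exact absurd this (by decide)
      · have : (X2 : G) = B := congrArg Prod.fst e
        exact absurd this (by decide)
    have e2 : psi (((X2 : G), false) :: S) = ((B : G), false) :: psi (L.map (fun q => (q, true))) := by
      rw [hSdef]
      rw [psi_cons2]
      rw [if_neg (by intro hc; exact absurd (congrArg Prod.snd hc.1) (by decide))]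
      rw [if_pos ⟨rfl, rfl⟩]
    have hiotaL : L.map (fun q => ((iota q, true) : Lam))
        = (L.map (fun q => (((1 : ℕ+), (1 : ℕ+) :: q.2) : G))).map (fun q => ((q, true) : Lam)) := by
      rw [List.map_map]
      apply List.map_congr_left
      intro q hq
      obtain ⟨j, s', rfl⟩ := hL q hq
      simp [iota]
    refine ⟨1, [], L.map (fun q => (((1 : ℕ+), (1 : ℕ+) :: q.2) : G)), ?_, ?_⟩
    · intro q' hq'
      obtain ⟨q, hq, rfl⟩ := List.mem_map.mp hq'
      exact ⟨1, q.2, by simp⟩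
    · rw [himg, e1, e2, hTflat, hiotaL]
      exact ⟨psi P₀, rfl⟩
  · -- non-straddling case
    have e1 : psi u.toWord = psi P ++ psi S := by
      rw [← hPS]
      apply psi_append
      intro a ha b hb
      have hbv : b = (((h, t) : G), false) := by
        rw [hSdef, List.head?_cons, Option.mem_some_iff] at hb
        exact hb.symm
      subst hbv
      intro hp
      rcases hp with ⟨-, e⟩ | ⟨ha', e⟩
      · have : (false : Bool) = true := congrArg Prod.snd e
        exact absurd this (by decide)
      · have ht' : ((h, t) : G) = B := congrArg Prod.fst e
        have hB : h = 1 ∧ t = [] := by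
          constructor
          · exact congrArg Prod.fst ht'
          · exact congrArg Prod.snd ht'
        exact hstr ⟨by rw [← ha']; exact ha, hB.1, hB.2⟩
    have e2 : psi S = phi (((h, t) : G), false) ++ L.map (fun q => ((iota q, true) : Lam)) := by
      rw [hSdef]
      rw [psi_flat _ (chain'_no_pat_of_forall _ hnotpat _), List.flatMap_cons, flat_trues L hqX2]
    by_cases hx : ((h, t) : G) = X2
    · -- base (2, []) case
      have e3 : phi (((h, t) : G), false) = [((B : G), false), ((A : G), true)] := by
        rw [hx]; exact phi_X2_false
      have hiotaL : L.map (fun q => ((iota q, true) : Lam))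
          = (L.map (fun q => (((1 : ℕ+), (q.2.headI + 1) :: q.2.tail) : G))).map
              (fun q => ((q, true) : Lam)) := by
        rw [List.map_map]
        apply List.map_congr_left
        intro q hq
        obtain ⟨j, s', rfl⟩ := hL q hq
        have hh2 : h = 2 := congrArg Prod.fst hx
        have ht0 : t = [] := congrArg Prod.snd hx
        subst hh2; subst ht0
        simp [iota]
      refine ⟨1, [], ((1 : ℕ+), [(1 : ℕ+)]) :: L.map (fun q => (((1 : ℕ+), (q.2.headI + 1) :: q.2.tail) : G)), ?_, ?_⟩
      · intro q' hq'
        rcases List.mem_cons.mp hq' with rfl | hq'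
        · exact ⟨1, [], rfl⟩
        · obtain ⟨q, hq, rfl⟩ := List.mem_map.mp hq'
          exact ⟨q.2.headI + 1, q.2.tail, by simp⟩
      · rw [himg, e1, e2, e3, hiotaL]
        refine ⟨psi P, ?_⟩
        simp [A, B]
    · -- generic case
      have e3 : phi (((h, t) : G), false) = [(iota (h, t), false)] := phi_of_ne hx false
      refine ⟨(iota (h, t)).1, (iota (h, t)).2, L.map iota, ?_, ?_⟩
      · intro q' hq'
        obtain ⟨q, hq, rfl⟩ := List.mem_map.mp hq'
        obtain ⟨j, s', rfl⟩ := hL q hq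
        obtain ⟨k, s'', hk⟩ := iota_special hx j s'
        exact ⟨k, s'', hk⟩
      · rw [himg, e1, e2, e3]
        refine ⟨psi P, ?_⟩
        rw [List.map_map]
        simp

end AH

/-- `â₁⁻¹` is an injective endomorphism of `F_•`, and it maps every special word
to a special word. -/
theorem aHatInv_injective_and_preserves_special :
    Function.Injective aHatInv ∧ ∀ u : FG, specialWord u → specialWord (aHatInv u) := by
  constructor
  · exact fun x y hxy => by rw [← AH.gi_aHat' x, ← AH.gi_aHat' y, hxy]
  · exact AH.preserves
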